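/- Let L be an infinite locally compact Hausdorff topological space without isolated points and let 𝒜 be a somewhat regular closed linear subspace of C₀(L). Then 𝒜 contains an asymptotically isometric copy of ℓ¹: there exist a sequence (δ_n) of real numbers with 0 ≤ δ_n < 1 for all n and δ_n → 0, and a sequence (x_n) in the closed unit ball of 𝒜, such that for every absolutely summable real sequence (a_n), the series Σ a_n x_n converges in 𝒜 and Σ (1 − δ_n)|a_n| ≤ ‖Σ a_n x_n‖ ≤ Σ |a_n|. -/

import Mathlib

open scoped ZeroAtInfty
open Filter Topology

/-- A linear subspace `𝒜` of `C₀(L, ℝ)` is *somewhat regular* if for every non-empty open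
subset `V` of `L` and every `ε` with `0 < ε < 1` there is `f ∈ 𝒜` with `‖f‖ = 1` and
`|f x| ≤ ε` for every `x ∈ L \ V`. -/
def SomewhatRegular {L : Type*} [TopologicalSpace L]
    (𝒜 : Submodule ℝ C₀(L, ℝ)) : Prop :=
  ∀ V : Set L, IsOpen V → V.Nonempty → ∀ ε : ℝ, 0 < ε → ε < 1 →
    ∃ f ∈ 𝒜, ‖f‖ = 1 ∧ ∀ x ∉ V, |f x| ≤ ε

/-!
Somewhat regularity yields peaking functions: norm one, close to `±1` on a small open set and
uniformly small outside a prescribed one. Since `L` has no isolated points, every nonempty open set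
contains two disjoint ones, so one builds a dyadic tree of nonempty open cells, indexed at level
`n` by the sign patterns `w : Fin n → Bool`, each cell inside its parent, together with `F n ∈ 𝒜`,
`‖F n‖ ≤ 1`, with `F n ≥ 1 - δ n` or `F n ≤ -(1 - δ n)` on each level-`(n + 1)` cell according to
its last sign; `F n` is a normalised signed sum of peaking functions for the level-`(n + 1)` cells,
whose disjointness keeps the sum of norm about one. At a point of the level-`N` cell of the sign
pattern of `a`, `∑ n < N, a n • F n` is at least `∑ n < N, (1 - δ n) * |a n|`; letting `N → ∞` in
the complete space `𝒜` gives the lower estimate, and the upper one is the triangle inequality.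
-/

namespace ZeroAtInftyContinuousMap

variable {L β : Type*} [TopologicalSpace L]

theorem norm_apply_le [NormedAddCommGroup β] (f : C₀(L, β)) (x : L) : ‖f x‖ ≤ ‖f‖ := by
  rw [← norm_toBCF_eq_norm]
  exact f.toBCF.norm_coe_le_norm x

theorem norm_le_of_forall_norm_apply_le [NormedAddCommGroup β] (f : C₀(L, β)) {C : ℝ}
    (hC : 0 ≤ C) (h : ∀ x, ‖f x‖ ≤ C) : ‖f‖ ≤ C := by
  rw [← norm_toBCF_eq_norm]
  exact (BoundedContinuousFunction.norm_le hC).2 h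

theorem sum_apply [TopologicalSpace β] [AddCommMonoid β] [ContinuousAdd β] {ι : Type*}
    (s : Finset ι) (f : ι → C₀(L, β)) (x : L) : (∑ i ∈ s, f i) x = ∑ i ∈ s, f i x :=
  map_sum (⟨⟨fun g : C₀(L, β) => g x, rfl⟩, fun _ _ => rfl⟩ : C₀(L, β) →+ β) f s

end ZeroAtInftyContinuousMap

theorem Finset.abs_sum_univ_sub_le {ι : Type*} [Fintype ι] [DecidableEq ι] (y : ι → ℝ) (i : ι)
    {ε : ℝ} (hε : 0 ≤ ε) (h : ∀ j ≠ i, |y j| ≤ ε) :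
    |∑ j, y j - y i| ≤ Fintype.card ι * ε := by
  rw [← Finset.sum_erase_eq_sub (Finset.mem_univ i)]
  calc |∑ j ∈ Finset.univ.erase i, y j|
      ≤ ∑ j ∈ Finset.univ.erase i, |y j| := Finset.abs_sum_le_sum_abs _ _
    _ ≤ (Finset.univ.erase i).card • ε :=
        Finset.sum_le_card_nsmul _ _ _ fun j hj => h j (Finset.ne_of_mem_erase hj)
    _ ≤ Fintype.card ι * ε := by
        rw [nsmul_eq_mul]
        gcongr
        exact_mod_cast (Finset.card_erase_le).trans Finset.card_univ.le

section DisjointPeaks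

open Function

variable {L ι : Type*} [Fintype ι] {W : ι → Set L} {c : ι → ℝ} {g : ι → L → ℝ} {ε : ℝ}

theorem abs_sum_mul_sub_le_of_mem (hW : Pairwise (Disjoint on W)) (hc : ∀ i, |c i| ≤ 1)
    (hgW : ∀ i, ∀ x ∉ W i, |g i x| ≤ ε) (hε : 0 ≤ ε) {i : ι} {x : L} (hx : x ∈ W i) :
    |∑ j, c j * g j x - c i * g i x| ≤ Fintype.card ι * ε := by
  classical
  refine Finset.abs_sum_univ_sub_le _ i hε fun j hji => ?_
  rw [abs_mul]
  exact (mul_le_of_le_one_left (abs_nonneg _) (hc j)).trans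
    (hgW j x fun hxj => Set.disjoint_left.1 (hW hji) hxj hx)

theorem abs_sum_mul_le (hW : Pairwise (Disjoint on W)) (hc : ∀ i, |c i| ≤ 1)
    (hg : ∀ i x, |g i x| ≤ 1) (hgW : ∀ i, ∀ x ∉ W i, |g i x| ≤ ε) (hε : 0 ≤ ε) (x : L) :
    |∑ j, c j * g j x| ≤ 1 + Fintype.card ι * ε := by
  have hterm : ∀ i, |c i * g i x| ≤ |g i x| := fun i => by
    rw [abs_mul]
    exact mul_le_of_le_one_left (abs_nonneg _) (hc i)
  by_cases hx : ∃ i, x ∈ W i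
  · obtain ⟨i, hi⟩ := hx
    have := abs_sub_abs_le_abs_sub (∑ j, c j * g j x) (c i * g i x)
    linarith [abs_sum_mul_sub_le_of_mem hW hc hgW hε hi, hterm i, hg i x]
  · simp only [not_exists] at hx
    calc |∑ j, c j * g j x| ≤ ∑ j, |c j * g j x| := Finset.abs_sum_le_sum_abs _ _
      _ ≤ Finset.univ.card • ε :=
          Finset.sum_le_card_nsmul _ _ _ fun j _ => (hterm j).trans (hgW j x (hx j))
      _ ≤ 1 + Fintype.card ι * ε := by rw [Finset.card_univ, nsmul_eq_mul]; linarith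

end DisjointPeaks

theorem tsum_le_norm_of_hasSum {E : Type*} [SeminormedAddCommGroup E] {f : ℕ → E} {s : E}
    (hf : HasSum f s) {g : ℕ → ℝ} (hg : Summable g)
    (h : ∀ N, ∑ n ∈ Finset.range N, g n ≤ ‖∑ n ∈ Finset.range N, f n‖) : ∑' n, g n ≤ ‖s‖ :=
  le_of_tendsto_of_tendsto' hg.hasSum.tendsto_sum_nat hf.tendsto_sum_nat.norm h

theorem exists_hasSum_smul_of_sum_range_le_norm {E : Type*} [SeminormedAddCommGroup E]
    [NormedSpace ℝ E] [CompleteSpace E] {x : ℕ → E} (hx : ∀ n, ‖x n‖ ≤ 1) {δ : ℕ → ℝ}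
    (hδ : ∀ n, 0 ≤ δ n ∧ δ n ≤ 1)
    (hlow : ∀ (a : ℕ → ℝ) N, ∑ n ∈ Finset.range N, (1 - δ n) * |a n| ≤
      ‖∑ n ∈ Finset.range N, a n • x n‖)
    {a : ℕ → ℝ} (ha : Summable fun n => |a n|) :
    ∃ s, HasSum (fun n => a n • x n) s ∧
      ∑' n, (1 - δ n) * |a n| ≤ ‖s‖ ∧ ‖s‖ ≤ ∑' n, |a n| := by
  have hbound : ∀ n, ‖a n • x n‖ ≤ |a n| := fun n => by
    simpa [norm_smul] using mul_le_mul_of_nonneg_left (hx n) (abs_nonneg (a n))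
  have hs := (ha.of_norm_bounded hbound).hasSum
  have hlowsum : Summable fun n => (1 - δ n) * |a n| :=
    ha.of_nonneg_of_le (fun n => mul_nonneg (by linarith [hδ n]) (abs_nonneg _))
      (fun n => mul_le_of_le_one_left (abs_nonneg _) (by linarith [hδ n]))
  exact ⟨_, hs, tsum_le_norm_of_hasSum hs hlowsum (hlow a),
    hs.norm_le_of_bounded ha.hasSum hbound⟩

section Topology

open Function

variable {L : Type*} [TopologicalSpace L]

def IsDisjointNonemptyOpenFamily {ι : Type*} (U : ι → Set L) : Prop :=
  (∀ i, IsOpen (U i)) ∧ (∀ i, (U i).Nonempty) ∧ Pairwise (Disjoint on U)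

theorem exists_disjoint_nonempty_open_subsets [T2Space L] (hL : ∀ x : L, ¬IsOpen {x})
    {U : Set L} (hU : IsOpen U) (hne : U.Nonempty) :
    ∃ V : Bool → Set L, IsDisjointNonemptyOpenFamily V ∧ ∀ b, V b ⊆ U := by
  obtain ⟨x, hx⟩ := hne
  obtain ⟨y, hy, hyx⟩ : ∃ y ∈ U, y ≠ x := by
    by_contra! h
    exact hL x (Set.eq_singleton_iff_unique_mem.2 ⟨hx, h⟩ ▸ hU)
  obtain ⟨O₁, O₂, hO₁, hO₂, hxO₁, hyO₂, hO⟩ := t2_separation hyx.symm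
  refine ⟨fun b => cond b (U ∩ O₁) (U ∩ O₂),
    ⟨Bool.forall_bool.2 ⟨hU.inter hO₂, hU.inter hO₁⟩,
      Bool.forall_bool.2 ⟨⟨y, hy, hyO₂⟩, ⟨x, hx, hxO₁⟩⟩,
      pairwise_disjoint_on_bool.2 (hO.mono Set.inter_subset_right Set.inter_subset_right)⟩,
    Bool.forall_bool.2 ⟨Set.inter_subset_left, Set.inter_subset_left⟩⟩

theorem IsDisjointNonemptyOpenFamily.exists_split [T2Space L] (hL : ∀ x : L, ¬IsOpen {x})
    {ι : Type*} {U : ι → Set L} (hU : IsDisjointNonemptyOpenFamily U) :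
    ∃ V : Bool × ι → Set L, IsDisjointNonemptyOpenFamily V ∧ ∀ p, V p ⊆ U p.2 := by
  choose V hV hVU using fun i => exists_disjoint_nonempty_open_subsets hL (hU.1 i) (hU.2.1 i)
  refine ⟨fun p => V p.2 p.1, ⟨fun p => (hV p.2).1 p.1, fun p => (hV p.2).2.1 p.1, ?_⟩,
    fun p => hVU p.2 p.1⟩
  rintro ⟨b, i⟩ ⟨b', i'⟩ hne
  by_cases hii' : i = i'
  · subst hii'
    exact (hV i).2.2 fun hbb' => hne (Prod.ext hbb' rfl)
  · exact (hU.2.2 hii').mono (hVU i b) (hVU i' b')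

end Topology

namespace SomewhatRegular

variable {L : Type*} [TopologicalSpace L] {𝒜 : Submodule ℝ C₀(L, ℝ)}

theorem exists_peak (h𝒜 : SomewhatRegular 𝒜) {W : Set L} (hW : IsOpen W) (hne : W.Nonempty)
    {ε η : ℝ} (hε : 0 < ε) (hη : 0 < η) (hεη : ε < 1 - η) :
    ∃ g ∈ 𝒜, ‖g‖ = 1 ∧ (∀ x ∉ W, |g x| ≤ ε) ∧
      ∃ A ⊆ W, IsOpen A ∧ A.Nonempty ∧ ∀ x ∈ A, 1 - η < g x := by
  obtain ⟨f, hf𝒜, hfnorm, hfW⟩ := h𝒜 W hW hne ε hε (by linarith)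
  obtain ⟨x₀, hx₀⟩ : ∃ x₀, 1 - η < |f x₀| := by
    by_contra! h
    have := f.norm_le_of_forall_norm_apply_le (by linarith) h
    linarith
  have hx₀W : x₀ ∈ W := by
    by_contra hx₀W
    linarith [hfW x₀ hx₀W]
  obtain ⟨g, hg𝒜, hgnorm, hgW, hgx₀⟩ :
      ∃ g ∈ 𝒜, ‖g‖ = 1 ∧ (∀ x ∉ W, |g x| ≤ ε) ∧ 1 - η < g x₀ := by
    rcases le_or_gt 0 (f x₀) with h | h
    · exact ⟨f, hf𝒜, hfnorm, hfW, by rwa [abs_of_nonneg h] at hx₀⟩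
    · refine ⟨-f, 𝒜.neg_mem hf𝒜, by rwa [norm_neg], fun x hx => ?_, ?_⟩
      · simpa using hfW x hx
      · simpa [abs_of_neg h] using hx₀
  exact ⟨g, hg𝒜, hgnorm, hgW, W ∩ g ⁻¹' Set.Ioi (1 - η), Set.inter_subset_left,
    hW.inter (isOpen_Ioi.preimage g.continuous), ⟨x₀, hx₀W, hgx₀⟩, fun x hx => hx.2⟩

theorem exists_signed_peaks (h𝒜 : SomewhatRegular 𝒜) {ι : Type*} [Fintype ι]
    {W : ι → Set L} (hW : IsDisjointNonemptyOpenFamily W) {c : ι → ℝ} (hc : ∀ i, |c i| = 1)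
    {η : ℝ} (hη0 : 0 < η) (hη1 : η < 1) :
    ∃ f ∈ 𝒜, ‖f‖ ≤ 1 ∧ ∃ A : ι → Set L, IsDisjointNonemptyOpenFamily A ∧
      (∀ i, A i ⊆ W i) ∧ ∀ i, ∀ x ∈ A i, 1 - η ≤ c i * f x := by
  set m : ℝ := (Fintype.card ι : ℝ)
  -- each peak leaks at most `ε` outside its own set, and the total leak `m * ε` is `≤ η / 4`
  set ε : ℝ := η / (4 * (m + 1))
  have hm : 0 ≤ m := Nat.cast_nonneg _
  have hε : 0 < ε := by positivity
  have hmε : m * ε ≤ η / 4 := by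
    rw [mul_div_assoc', div_le_div_iff₀ (by positivity) (by norm_num)]
    nlinarith
  have hεη : ε < 1 - η / 2 := by
    have : ε ≤ η / 4 := div_le_div_of_nonneg_left hη0.le (by norm_num) (by linarith)
    linarith
  choose g hg𝒜 hgnorm hgW A hAW hAo hAne hAg using
    fun i => h𝒜.exists_peak (hW.1 i) (hW.2.1 i) hε (half_pos hη0) hεη
  set f₀ : C₀(L, ℝ) := ∑ i, c i • g i
  have hf₀ : ∀ x, f₀ x = ∑ i, c i * g i x := fun x => by
    simp only [f₀, ZeroAtInftyContinuousMap.sum_apply, ZeroAtInftyContinuousMap.smul_apply,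
      smul_eq_mul]
  have hc' : ∀ i, |c i| ≤ 1 := fun i => (hc i).le
  have hg : ∀ i x, |g i x| ≤ 1 := fun i x => hgnorm i ▸ (g i).norm_apply_le x
  have hf₀peak : ∀ i, ∀ x ∈ A i, 1 - η / 2 - m * ε ≤ c i * f₀ x := fun i x hx => by
    have hleak := abs_sum_mul_sub_le_of_mem hW.2.2 hc' hgW hε.le (hAW i hx)
    rw [← hf₀] at hleak
    have hci : c i * c i = 1 := by rw [← abs_mul_abs_self, hc, one_mul]
    have hsplit : c i * f₀ x = g i x + c i * (f₀ x - c i * g i x) := by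
      linear_combination (g i x) * hci
    have := neg_abs_le (c i * (f₀ x - c i * g i x))
    rw [abs_mul, hc, one_mul] at this
    linarith [hAg i x hx]
  have ht : 0 < 1 + m * ε := by positivity
  refine ⟨(1 + m * ε)⁻¹ • f₀, 𝒜.smul_mem _ (𝒜.sum_mem fun i _ => 𝒜.smul_mem _ (hg𝒜 i)), ?_,
    A, ⟨hAo, hAne, fun i j hij => (hW.2.2 hij).mono (hAW i) (hAW j)⟩, hAW, fun i x hx => ?_⟩
  · refine ZeroAtInftyContinuousMap.norm_le_of_forall_norm_apply_le _ zero_le_one fun x => ?_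
    rw [ZeroAtInftyContinuousMap.smul_apply, norm_smul, norm_inv, Real.norm_of_nonneg ht.le,
      Real.norm_eq_abs, inv_mul_le_iff₀ ht, mul_one, hf₀]
    exact abs_sum_mul_le hW.2.2 hc' hg hgW hε.le x
  · rw [ZeroAtInftyContinuousMap.smul_apply, smul_eq_mul, mul_left_comm, le_inv_mul_iff₀ ht]
    nlinarith [hf₀peak i x hx]

theorem exists_refinement [T2Space L] (h𝒜 : SomewhatRegular 𝒜) (hL : ∀ x : L, ¬IsOpen {x})
    {n : ℕ} {C : (Fin n → Bool) → Set L} (hC : IsDisjointNonemptyOpenFamily C)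
    {η : ℝ} (hη0 : 0 < η) (hη1 : η < 1) :
    ∃ f ∈ 𝒜, ‖f‖ ≤ 1 ∧ ∃ C' : (Fin (n + 1) → Bool) → Set L, IsDisjointNonemptyOpenFamily C' ∧
      (∀ w, C' w ⊆ C (Fin.init w)) ∧
      ∀ w, ∀ x ∈ C' w, 1 - η ≤ (if w (Fin.last n) then 1 else -1) * f x := by
  obtain ⟨V, hV, hVC⟩ := hC.exists_split hL
  obtain ⟨f, hf𝒜, hfnorm, A, hA, hAV, hAf⟩ := h𝒜.exists_signed_peaks hV
    (c := fun p => if p.1 then 1 else -1) (fun p => by split_ifs <;> norm_num) hη0 hη1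
  let e := (Fin.snocEquiv (n := n) fun _ => Bool).symm
  exact ⟨f, hf𝒜, hfnorm, A ∘ e, ⟨fun w => hA.1 (e w), fun w => hA.2.1 (e w),
    hA.2.2.comp_of_injective e.injective⟩, fun w => (hAV (e w)).trans (hVC (e w)),
    fun w => hAf (e w)⟩

theorem exists_tree [T2Space L] [Nonempty L] (h𝒜 : SomewhatRegular 𝒜)
    (hL : ∀ x : L, ¬IsOpen {x}) {δ : ℕ → ℝ} (hδ : ∀ n, 0 < δ n ∧ δ n < 1) :
    ∃ (F : ℕ → C₀(L, ℝ)) (C : (n : ℕ) → (Fin n → Bool) → Set L),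
      (∀ n, F n ∈ 𝒜 ∧ ‖F n‖ ≤ 1) ∧ (∀ n w, (C n w).Nonempty) ∧
      (∀ n w, C (n + 1) w ⊆ C n (Fin.init w)) ∧
      ∀ n w, ∀ x ∈ C (n + 1) w, 1 - δ n ≤ (if w (Fin.last n) then 1 else -1) * F n x := by
  let Level (n : ℕ) := {C : (Fin n → Bool) → Set L // IsDisjointNonemptyOpenFamily C}
  choose F hF𝒜 hFnorm next hnext hnextC hnextF using
    fun n (C : Level n) => h𝒜.exists_refinement hL C.2 (hδ n).1 (hδ n).2
  let level : (n : ℕ) → Level n := fun n => Nat.rec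
    ⟨fun _ => Set.univ, fun _ => isOpen_univ, fun _ => Set.univ_nonempty,
      Subsingleton.pairwise⟩
    (fun n C => ⟨next n C, hnext n C⟩) n
  exact ⟨fun n => F n (level n), fun n => (level n).1, fun n => ⟨hF𝒜 n _, hFnorm n _⟩,
    fun n => (level n).2.2.1, fun n => hnextC n _, fun n => hnextF n _⟩

theorem exists_ell1_lower_estimate [T2Space L] [Nonempty L] (h𝒜 : SomewhatRegular 𝒜)
    (hL : ∀ x : L, ¬IsOpen {x}) {δ : ℕ → ℝ} (hδ : ∀ n, 0 < δ n ∧ δ n < 1) :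
    ∃ x : ℕ → 𝒜, (∀ n, ‖x n‖ ≤ 1) ∧ ∀ (a : ℕ → ℝ) N,
      ∑ n ∈ Finset.range N, (1 - δ n) * |a n| ≤ ‖∑ n ∈ Finset.range N, a n • x n‖ := by
  obtain ⟨F, C, hF, hCne, hCC, hCF⟩ := h𝒜.exists_tree hL hδ
  refine ⟨fun n => ⟨F n, (hF n).1⟩, fun n => (hF n).2, fun a N => ?_⟩
  let σ : ℕ → Bool := fun n => decide (0 ≤ a n)
  obtain ⟨x₀, hx₀⟩ := hCne N fun i => σ i
  have hanti : Antitone fun n => C n fun i => σ i := antitone_nat_of_succ_le fun n => hCC n _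
  have hterm : ∀ n < N, (1 - δ n) * |a n| ≤ a n * F n x₀ := fun n hn => by
    have := hCF n _ x₀ (hanti (Nat.succ_le_of_lt hn) hx₀)
    by_cases ha : 0 ≤ a n
    · simp only [Fin.val_last, σ, ha, decide_true, ↓reduceIte, one_mul] at this
      rw [abs_of_nonneg ha, mul_comm]
      exact mul_le_mul_of_nonneg_left this ha
    · simp only [Fin.val_last, σ, ha, decide_false, Bool.false_eq_true, ↓reduceIte] at this
      rw [abs_of_neg (not_le.1 ha)]
      nlinarith
  calc ∑ n ∈ Finset.range N, (1 - δ n) * |a n|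
      ≤ ∑ n ∈ Finset.range N, a n * F n x₀ :=
        Finset.sum_le_sum fun n hn => hterm n (Finset.mem_range.1 hn)
    _ = (∑ n ∈ Finset.range N, a n • F n) x₀ := by
        simp only [ZeroAtInftyContinuousMap.sum_apply, ZeroAtInftyContinuousMap.smul_apply,
          smul_eq_mul]
    _ ≤ ‖∑ n ∈ Finset.range N, a n • F n‖ :=
        (le_abs_self _).trans
          (ZeroAtInftyContinuousMap.norm_apply_le (∑ n ∈ Finset.range N, a n • F n) x₀)
    _ = ‖∑ n ∈ Finset.range N, a n • (⟨F n, (hF n).1⟩ : 𝒜)‖ := by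
        rw [← Submodule.norm_coe, Submodule.coe_sum]
        rfl

end SomewhatRegular

theorem somewhat_regular_contains_asymptotically_isometric_l1_general
    {L : Type*} [TopologicalSpace L] [T2Space L] [Infinite L]
    (hL : ∀ x : L, ¬ IsOpen ({x} : Set L))
    (𝒜 : Submodule ℝ C₀(L, ℝ)) (hclosed : IsClosed (𝒜 : Set C₀(L, ℝ)))
    (h𝒜 : SomewhatRegular 𝒜) :
    ∃ (δ : ℕ → ℝ) (x : ℕ → 𝒜),
      (∀ n, 0 ≤ δ n ∧ δ n < 1) ∧
      Tendsto δ atTop (𝓝 0) ∧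
      (∀ n, ‖x n‖ ≤ 1) ∧
      ∀ a : ℕ → ℝ, Summable (fun n => |a n|) →
        ∃ s : 𝒜, HasSum (fun n => a n • x n) s ∧
          (∑' n, (1 - δ n) * |a n|) ≤ ‖s‖ ∧ ‖s‖ ≤ ∑' n, |a n| := by
  have : CompleteSpace 𝒜 := hclosed.completeSpace_coe
  obtain ⟨δ, hδ, hδlim⟩ : ∃ δ : ℕ → ℝ, (∀ n, 0 < δ n ∧ δ n < 1) ∧ Tendsto δ atTop (𝓝 0) :=
    ⟨fun n => (1 / 2) ^ (n + 1),
      fun n => ⟨by positivity, pow_lt_one₀ (by norm_num) (by norm_num) n.succ_ne_zero⟩,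
      (tendsto_pow_atTop_nhds_zero_of_lt_one (by norm_num) (by norm_num)).comp
        (tendsto_add_atTop_nat 1)⟩
  obtain ⟨x, hx, hlow⟩ := h𝒜.exists_ell1_lower_estimate hL hδ
  refine ⟨δ, x, fun n => ⟨(hδ n).1.le, (hδ n).2⟩, hδlim, hx, fun a ha => ?_⟩
  -- synthesizing the instances on `𝒜` first keeps unification with `hx` from timing out
  have h := exists_hasSum_smul_of_sum_range_le_norm (x := x)
  exact h hx (fun n => ⟨(hδ n).1.le, (hδ n).2.le⟩) hlow ha

/-- If `L` has no isolated points, every somewhat regular closed linear subspace `𝒜` of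
`C₀(L)` contains an asymptotically isometric copy of `ℓ¹`. -/
theorem somewhat_regular_contains_asymptotically_isometric_l1
    {L : Type*} [TopologicalSpace L] [LocallyCompactSpace L] [T2Space L] [Infinite L]
    (hL : ∀ x : L, ¬ IsOpen ({x} : Set L))
    (𝒜 : Submodule ℝ C₀(L, ℝ)) (hclosed : IsClosed (𝒜 : Set C₀(L, ℝ)))
    (h𝒜 : SomewhatRegular 𝒜) :
    ∃ (δ : ℕ → ℝ) (x : ℕ → 𝒜),
      (∀ n, 0 ≤ δ n ∧ δ n < 1) ∧
      Tendsto δ atTop (𝓝 0) ∧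
      (∀ n, ‖x n‖ ≤ 1) ∧
      ∀ a : ℕ → ℝ, Summable (fun n => |a n|) →
        ∃ s : 𝒜, HasSum (fun n => a n • x n) s ∧
          (∑' n, (1 - δ n) * |a n|) ≤ ‖s‖ ∧ ‖s‖ ≤ ∑' n, |a n| :=
  somewhat_regular_contains_asymptotically_isometric_l1_general hL 𝒜 hclosed h𝒜
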